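/- arXiv:2111.13878 — 5 statements merged into one kernel-verified Lean document; each statement's English description precedes it below -/
import Mathlib

section
/- Let n be a positive integer and let {G₁, …, G_J} be a partition of {1, …, n} into nonempty pairwise disjoint index sets. Let κ₁, …, κ_J > 0 and u ∈ ℝⁿ. The function w ↦ Σ_{j=1}^J κ_j‖w_{G_j}‖ + (1/2)‖w − u‖² on ℝⁿ attains its minimum at a unique point v, and v is given blockwise by v_{G_j} = (1 − κ_j/‖u_{G_j}‖)·u_{G_j} if ‖u_{G_j}‖ > κ_j, and v_{G_j} = 0 if ‖u_{G_j}‖ ≤ κ_j, for each j = 1, …, J. -/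
/-!
The blocks partition the coordinates, so the objective is the sum over `j` of the block
objectives `f_j(x) = κ_j ‖x‖ + ‖x - u_{G_j}‖² / 2`. Soft thresholding `v = S_κ(u)` satisfies the
optimality condition `u - v ∈ κ ∂‖·‖(v)`, i.e. `‖u - v‖ ≤ κ` and `⟪u - v, v⟫ = κ ‖v‖`; with the
`1`-strong convexity of the quadratic term this gives `f(x) ≥ f(v) + ‖x - v‖² / 2` on every block.
Summing over the blocks, the objective exceeds its value at `v` by at least `‖w - v‖² / 2 > 0`.
-/

open RealInnerProductSpace

section SoftThreshold

variable {E : Type*} [NormedAddCommGroup E] [InnerProductSpace ℝ E]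

noncomputable def proxObjective (κ : ℝ) (u x : E) : ℝ := κ * ‖x‖ + ‖x - u‖ ^ 2 / 2

noncomputable def softThreshold (κ : ℝ) (u : E) : E :=
  if κ < ‖u‖ then (1 - κ / ‖u‖) • u else 0

theorem proxObjective_add_le {κ : ℝ} {u v : E} (hnorm : ‖u - v‖ ≤ κ)
    (hinner : ⟪u - v, v⟫ = κ * ‖v‖) (x : E) :
    proxObjective κ u v + ‖x - v‖ ^ 2 / 2 ≤ proxObjective κ u x := by
  have hexpand : ‖x - u‖ ^ 2 = ‖x - v‖ ^ 2 + 2 * ⟪x - v, v - u⟫ + ‖v - u‖ ^ 2 := by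
    rw [← norm_add_sq_real, sub_add_sub_cancel]
  have hcross : ⟪x - v, v - u⟫ = κ * ‖v‖ - ⟪x, u - v⟫ := by
    rw [← neg_sub u v, inner_neg_right, inner_sub_left, real_inner_comm (u - v) v, hinner]; ring
  have hcs : ⟪x, u - v⟫ ≤ κ * ‖x‖ :=
    (real_inner_le_norm _ _).trans (by rw [mul_comm]; gcongr)
  unfold proxObjective
  nlinarith

theorem sub_softThreshold_of_lt {κ : ℝ} {u : E} (h : κ < ‖u‖) :
    u - softThreshold κ u = (κ / ‖u‖) • u := by
  rw [softThreshold, if_pos h, sub_smul, one_smul, sub_sub_cancel]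

theorem norm_sub_softThreshold_le {κ : ℝ} (hκ : 0 ≤ κ) (u : E) :
    ‖u - softThreshold κ u‖ ≤ κ := by
  by_cases h : κ < ‖u‖
  · have hu : 0 < ‖u‖ := hκ.trans_lt h
    rw [sub_softThreshold_of_lt h, norm_smul_of_nonneg (by positivity), div_mul_cancel₀ _ hu.ne']
  · rw [softThreshold, if_neg h, sub_zero]
    exact not_lt.mp h

theorem inner_sub_softThreshold {κ : ℝ} (hκ : 0 ≤ κ) (u : E) :
    ⟪u - softThreshold κ u, softThreshold κ u⟫ = κ * ‖softThreshold κ u‖ := by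
  by_cases h : κ < ‖u‖
  · have hu : 0 < ‖u‖ := hκ.trans_lt h
    have hc : 0 ≤ 1 - κ / ‖u‖ := sub_nonneg.mpr ((div_le_one hu).mpr h.le)
    rw [sub_softThreshold_of_lt h, softThreshold, if_pos h, real_inner_smul_left,
      real_inner_smul_right, real_inner_self_eq_norm_sq, norm_smul_of_nonneg hc]
    field_simp
  · simp [softThreshold, if_neg h]

theorem proxObjective_softThreshold_add_le {κ : ℝ} (hκ : 0 ≤ κ) (u x : E) :
    proxObjective κ u (softThreshold κ u) + ‖x - softThreshold κ u‖ ^ 2 / 2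
      ≤ proxObjective κ u x :=
  proxObjective_add_le (norm_sub_softThreshold_le hκ u) (inner_sub_softThreshold hκ u) x

end SoftThreshold

namespace EuclideanSpace

variable {𝕜 ι : Type*} [RCLike 𝕜]

noncomputable def restrict (s : Finset ι) : EuclideanSpace 𝕜 ι →ₗ[𝕜] EuclideanSpace 𝕜 s where
  toFun x := WithLp.toLp 2 fun i => x i
  map_add' x y := by ext; simp
  map_smul' c x := by ext; simp

@[simp]
theorem restrict_apply (s : Finset ι) (x : EuclideanSpace 𝕜 ι) (i : s) :
    restrict s x i = x i :=
  rfl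

theorem real_norm_restrict (s : Finset ι) (x : EuclideanSpace ℝ ι) :
    ‖restrict s x‖ = √(∑ k ∈ s, x k ^ 2) := by
  rw [norm_eq, ← Finset.sum_coe_sort s]
  simp

theorem sum_norm_restrict_sq [Fintype ι] {J : Type*} [Fintype J] {G : J → Finset ι}
    (hdisj : ∀ j k, j ≠ k → Disjoint (G j) (G k)) (hcover : ∀ i, ∃ j, i ∈ G j)
    (x : EuclideanSpace ℝ ι) :
    ∑ j, ‖restrict (G j) x‖ ^ 2 = ‖x‖ ^ 2 := by
  classical
  have hunion : Finset.univ.biUnion G = Finset.univ := by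
    ext i; simpa using hcover i
  simp only [real_norm_restrict, Real.sq_sqrt (Finset.sum_nonneg fun _ _ => sq_nonneg _),
    real_norm_sq_eq]
  rw [← Finset.sum_biUnion fun j _ k _ hjk => hdisj j k hjk, hunion]

end EuclideanSpace

open EuclideanSpace

theorem restrict_eq_softThreshold {ι : Type*} {s : Finset ι} {κ : ℝ}
    {u v : EuclideanSpace ℝ ι}
    (hv : ∀ i ∈ s, v i = if κ < √(∑ k ∈ s, u k ^ 2)
      then (1 - κ / √(∑ k ∈ s, u k ^ 2)) * u i else 0) :
    restrict s v = softThreshold κ (restrict s u) := by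
  ext i
  rw [restrict_apply, hv i i.2, softThreshold, real_norm_restrict]
  split_ifs <;> simp

theorem sum_proxObjective_restrict {ι J : Type*} [Fintype ι] [Fintype J] {G : J → Finset ι}
    (hdisj : ∀ j k, j ≠ k → Disjoint (G j) (G k)) (hcover : ∀ i, ∃ j, i ∈ G j)
    (κ : J → ℝ) (u x : EuclideanSpace ℝ ι) :
    ∑ j, proxObjective (κ j) (restrict (G j) u) (restrict (G j) x)
      = ∑ j, κ j * √(∑ k ∈ G j, x k ^ 2) + 1 / 2 * ‖x - u‖ ^ 2 := by
  simp only [proxObjective, ← map_sub, Finset.sum_add_distrib, ← Finset.sum_div,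
    sum_norm_restrict_sq hdisj hcover]
  simp only [real_norm_restrict]
  ring

theorem group_soft_thresholding_general (n J : ℕ)
    (G : Fin J → Finset (Fin n))
    (hGdisj : ∀ j k, j ≠ k → Disjoint (G j) (G k))
    (hGcover : ∀ i, ∃ j, i ∈ G j)
    (κ : Fin J → ℝ) (hκ : ∀ j, 0 < κ j)
    (u v : EuclideanSpace ℝ (Fin n))
    (hv : ∀ j, ∀ i ∈ G j,
      v i = if κ j < Real.sqrt (∑ k ∈ G j, (u k) ^ 2)
        then (1 - κ j / Real.sqrt (∑ k ∈ G j, (u k) ^ 2)) * u i else 0) :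
    ∀ w : EuclideanSpace ℝ (Fin n), w ≠ v →
      (∑ j, κ j * Real.sqrt (∑ k ∈ G j, (v k) ^ 2)) + 1 / 2 * ‖v - u‖ ^ 2 <
      (∑ j, κ j * Real.sqrt (∑ k ∈ G j, (w k) ^ 2)) + 1 / 2 * ‖w - u‖ ^ 2 := by
  intro w hw
  set F := fun x => ∑ j, proxObjective (κ j) (restrict (G j) u) (restrict (G j) x)
  have hgrowth : ∀ j, proxObjective (κ j) (restrict (G j) u) (restrict (G j) v)
      + ‖restrict (G j) w - restrict (G j) v‖ ^ 2 / 2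
        ≤ proxObjective (κ j) (restrict (G j) u) (restrict (G j) w) := fun j => by
    rw [restrict_eq_softThreshold (hv j)]
    exact proxObjective_softThreshold_add_le (hκ j).le _ _
  have hdist : 0 < ‖w - v‖ ^ 2 / 2 := by
    have := norm_pos_iff.mpr (sub_ne_zero.mpr hw)
    positivity
  calc _ = F v := (sum_proxObjective_restrict hGdisj hGcover κ u v).symm
    _ < F v + ‖w - v‖ ^ 2 / 2 := lt_add_of_pos_right _ hdist
    _ = ∑ j, (proxObjective (κ j) (restrict (G j) u) (restrict (G j) v)
          + ‖restrict (G j) w - restrict (G j) v‖ ^ 2 / 2) := by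
      simp only [F, Finset.sum_add_distrib, ← Finset.sum_div, ← map_sub,
        sum_norm_restrict_sq hGdisj hGcover]
    _ ≤ F w := Finset.sum_le_sum fun j _ => hgrowth j
    _ = _ := sum_proxObjective_restrict hGdisj hGcover κ u w

/-- The function `w ↦ Σⱼ κⱼ‖w_{Gⱼ}‖ + (1/2)‖w − u‖²` on `ℝⁿ` (where
`{G₁,…,G_J}` is a partition of `{1,…,n}` and `κⱼ > 0`) has a unique minimizer `v`,
given blockwise by `v_{Gⱼ} = (1 − κⱼ/‖u_{Gⱼ}‖)·u_{Gⱼ}` if `‖u_{Gⱼ}‖ > κⱼ` and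
`v_{Gⱼ} = 0` otherwise. -/
theorem group_soft_thresholding (n J : ℕ) (hn : 0 < n) (hJ : 0 < J)
    (G : Fin J → Finset (Fin n))
    (hGne : ∀ j, (G j).Nonempty)
    (hGdisj : ∀ j k, j ≠ k → Disjoint (G j) (G k))
    (hGcover : ∀ i, ∃ j, i ∈ G j)
    (κ : Fin J → ℝ) (hκ : ∀ j, 0 < κ j)
    (u v : EuclideanSpace ℝ (Fin n))
    (hv : ∀ j, ∀ i ∈ G j,
      v i = if κ j < Real.sqrt (∑ k ∈ G j, (u k) ^ 2)
        then (1 - κ j / Real.sqrt (∑ k ∈ G j, (u k) ^ 2)) * u i else 0) :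
    ∀ w : EuclideanSpace ℝ (Fin n), w ≠ v →
      (∑ j, κ j * Real.sqrt (∑ k ∈ G j, (v k) ^ 2)) + 1 / 2 * ‖v - u‖ ^ 2 <
      (∑ j, κ j * Real.sqrt (∑ k ∈ G j, (w k) ^ 2)) + 1 / 2 * ‖w - u‖ ^ 2 :=
  group_soft_thresholding_general n J G hGdisj hGcover κ hκ u v hv
end

section
/- Let n be a positive integer, let {G₁, …, G_J} be a partition of {1, …, n} into nonempty pairwise disjoint index sets, let λ₁ ≥ 0, λ₂ ≥ 0, ω₁, …, ω_J > 0, and set p₁(x) = λ₁ Σ_{j=1}^J ω_j‖x_{G_j}‖ and p₂(x) = λ₂‖x‖₁. For any u ∈ ℝⁿ, let v be the unique minimizer of w ↦ p₂(w) + (1/2)‖w − u‖². Then the unique minimizer of w ↦ p₁(w) + p₂(w) + (1/2)‖w − u‖² coincides with the unique minimizer of w ↦ p₁(w) + (1/2)‖w − v‖²; that is, the proximal mapping of p₁ + p₂ equals the composition Prox_{p₁} ∘ Prox_{p₂}. -/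
/-!
Call `g` a subgradient of `f` at `x` if `f w ≥ f x + ⟪g, w - x⟫` for all `w`. Expanding the
square shows that `x` is the unique minimizer of `f + ½‖· - u‖²` as soon as `u - x` is a
subgradient of `f` at `x`.

Both proximal maps are explicit shrinkages: `v = Prox_{p₂} u` is coordinatewise soft
thresholding, and `x = Prox_{p₁} v` multiplies each block `v_{G_j}` by a factor `c_j ≥ 0`, so that
`v - x` is a subgradient of `p₁` at `x`. A subgradient of a positively homogeneous function at `y`
is also one at every `c • y` with `c ≥ 0`; as `p₂` is a sum of such functions of the single
coordinates and `x_i = c_j v_i`, the subgradient `u - v` of `p₂` at `v` is one at `x` as well.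
Adding, `u - x = (v - x) + (u - v)` is a subgradient of `p₁ + p₂` at `x`.
-/

open scoped InnerProductSpace

section Subgradient

variable {E : Type*} [NormedAddCommGroup E] [InnerProductSpace ℝ E]

def IsSubgradient (f : E → ℝ) (x g : E) : Prop :=
  ∀ w, f x + ⟪g, w - x⟫_ℝ ≤ f w

def IsProx (f : E → ℝ) (u x : E) : Prop :=
  ∀ w, f x + 1 / 2 * ‖x - u‖ ^ 2 ≤ f w + 1 / 2 * ‖w - u‖ ^ 2

variable {f f' : E → ℝ} {x g g' u : E}

theorem IsSubgradient.add (h : IsSubgradient f x g) (h' : IsSubgradient f' x g') :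
    IsSubgradient (fun w => f w + f' w) x (g + g') := fun w => by
  have := h w
  have := h' w
  rw [inner_add_left]
  linarith

theorem IsSubgradient.add_half_sq_norm_le (h : IsSubgradient f x (u - x)) (w : E) :
    f x + 1 / 2 * ‖x - u‖ ^ 2 + 1 / 2 * ‖w - x‖ ^ 2 ≤ f w + 1 / 2 * ‖w - u‖ ^ 2 := by
  have hw : ‖w - u‖ ^ 2 = ‖w - x‖ ^ 2 - 2 * ⟪u - x, w - x⟫_ℝ + ‖x - u‖ ^ 2 := by
    rw [real_inner_comm, norm_sub_rev x u, ← norm_sub_sq_real, sub_sub_sub_cancel_right]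
  linarith [h w]

theorem IsSubgradient.isProx (h : IsSubgradient f x (u - x)) : IsProx f u x := fun w => by
  linarith [h.add_half_sq_norm_le w, sq_nonneg ‖w - x‖]

theorem IsSubgradient.eq_of_isProx (h : IsSubgradient f x (u - x)) {w : E}
    (hw : IsProx f u w) : w = x := by
  have hsq : ‖w - x‖ ^ 2 ≤ 0 := by linarith [h.add_half_sq_norm_le w, hw x]
  rw [← sub_eq_zero, ← norm_eq_zero]
  exact pow_eq_zero_iff two_ne_zero |>.mp (le_antisymm hsq (sq_nonneg _))

theorem IsSubgradient.smul_of_homogeneous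
    (hf : ∀ c : ℝ, 0 ≤ c → ∀ y, f (c • y) = c * f y) (h : IsSubgradient f x g) {c : ℝ}
    (hc : 0 ≤ c) : IsSubgradient f (c • x) g := by
  have hf0 : f 0 = 0 := by simpa using hf 0 le_rfl 0
  have hfx : f x = ⟪g, x⟫_ℝ := by
    have h0 := h 0
    have h2 := h ((2 : ℝ) • x)
    rw [hf 2 zero_le_two, two_smul, add_sub_cancel_right] at h2
    rw [hf0, zero_sub, inner_neg_right] at h0
    linarith
  intro w
  have hw := h w
  rw [hf c hc, inner_sub_right, inner_smul_right, hfx]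
  rw [inner_sub_right, hfx] at hw
  linarith

theorem isSubgradient_mul_norm {a : ℝ} (hg : ‖g‖ ≤ a) (hgx : ⟪g, x⟫_ℝ = a * ‖x‖) :
    IsSubgradient (fun y => a * ‖y‖) x g := fun w => by
  have : ⟪g, w⟫_ℝ ≤ a * ‖w‖ :=
    (real_inner_le_norm g w).trans (mul_le_mul_of_nonneg_right hg (norm_nonneg w))
  rw [inner_sub_right]
  linarith

noncomputable def shrinkFactor (a r : ℝ) : ℝ :=
  if r ≤ a then 0 else 1 - a / r

theorem shrinkFactor_nonneg {a r : ℝ} (hr : 0 ≤ r) : 0 ≤ shrinkFactor a r := by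
  unfold shrinkFactor
  split_ifs with h
  · exact le_rfl
  · rw [not_le] at h
    rcases hr.eq_or_lt with rfl | hr
    · simp
    · linarith [(div_lt_one hr).2 h]

theorem isSubgradient_mul_norm_shrinkFactor {a : ℝ} (ha : 0 ≤ a) (v : E) :
    IsSubgradient (fun y => a * ‖y‖) (shrinkFactor a ‖v‖ • v) (v - shrinkFactor a ‖v‖ • v) := by
  unfold shrinkFactor
  split_ifs with h
  · exact isSubgradient_mul_norm (by simpa using h) (by simp)
  · rw [not_le] at h
    have hv : 0 < ‖v‖ := ha.trans_lt h
    have hg : v - (1 - a / ‖v‖) • v = (a / ‖v‖) • v := by module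
    apply isSubgradient_mul_norm
    · rw [hg, norm_smul, Real.norm_of_nonneg (by positivity), div_mul_cancel₀ _ hv.ne']
    · rw [hg, inner_smul_left, inner_smul_right, real_inner_self_eq_norm_sq, norm_smul,
        Real.norm_of_nonneg (by linarith [(div_lt_one hv).2 h])]
      simp only [conj_trivial]
      field_simp

end Subgradient

section Euclidean

variable {ι : Type*}

theorem isSubgradient_sum_apply [Fintype ι] (φ : ι → ℝ → ℝ) {x g : EuclideanSpace ℝ ι}
    (h : ∀ i, IsSubgradient (φ i) (x i) (g i)) :
    IsSubgradient (fun y : EuclideanSpace ℝ ι => ∑ i, φ i (y i)) x g := fun w => by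
  simpa [PiLp.inner_apply, Finset.sum_add_distrib] using
    Finset.sum_le_sum fun i (_ : i ∈ Finset.univ) => h i (w i)

theorem isSubgradient_apply_of_isProx_sum_mul_norm [Fintype ι] {a : ℝ} (ha : 0 ≤ a)
    {u v : EuclideanSpace ℝ ι} (hv : IsProx (fun y => ∑ i, a * ‖y i‖) u v) (i : ι) :
    IsSubgradient (fun t => a * ‖t‖) (v i) ((u - v) i) := by
  -- `t` is the soft thresholding of `u`; by uniqueness of the prox point, `v = t`.
  let t : EuclideanSpace ℝ ι := WithLp.toLp 2 fun i => shrinkFactor a ‖u i‖ • u i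
  have ht : ∀ i, IsSubgradient (fun s => a * ‖s‖) (t i) ((u - t) i) := fun i =>
    isSubgradient_mul_norm_shrinkFactor ha (u i)
  rw [(isSubgradient_sum_apply (fun _ s => a * ‖s‖) ht).eq_of_isProx hv]
  exact ht i

theorem isSubgradient_sum_mul_norm_of_apply_eq_mul [Fintype ι] {a : ℝ}
    {v x g : EuclideanSpace ℝ ι} (hv : ∀ i, IsSubgradient (fun t => a * ‖t‖) (v i) (g i))
    (hx : ∀ i, ∃ c, 0 ≤ c ∧ x i = c * v i) :
    IsSubgradient (fun y => ∑ i, a * ‖y i‖) x g := by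
  refine isSubgradient_sum_apply (fun _ t => a * ‖t‖) fun i => ?_
  obtain ⟨c, hc, hxi⟩ := hx i
  rw [hxi, ← smul_eq_mul]
  refine (hv i).smul_of_homogeneous (fun d hd y => ?_) hc
  rw [norm_smul, Real.norm_of_nonneg hd, mul_left_comm]

def restrictBlock (s : Finset ι) : EuclideanSpace ℝ ι →ₗ[ℝ] EuclideanSpace ℝ s where
  toFun y := WithLp.toLp 2 fun k => y k
  map_add' _ _ := rfl
  map_smul' _ _ := rfl

@[simp]
theorem restrictBlock_apply (s : Finset ι) (y : EuclideanSpace ℝ ι) (k : s) :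
    restrictBlock s y k = y k := rfl

theorem norm_restrictBlock [Fintype ι] (s : Finset ι) (y : EuclideanSpace ℝ ι) :
    ‖restrictBlock s y‖ = √(∑ k ∈ s, y k ^ 2) := by
  simp [EuclideanSpace.norm_eq, Finset.sum_attach s fun k => y k ^ 2]

theorem inner_restrictBlock [Fintype ι] (s : Finset ι) (g y : EuclideanSpace ℝ ι) :
    ⟪restrictBlock s g, restrictBlock s y⟫_ℝ = ∑ k ∈ s, ⟪g k, y k⟫_ℝ := by
  simp [PiLp.inner_apply, Finset.sum_attach s fun k => y k * g k]

variable {J : Type*} {G : J → Finset ι}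

theorem sum_eq_sum_sum_of_partition [Fintype ι] [Fintype J] {M : Type*} [AddCommMonoid M]
    (hdisj : ∀ j k, j ≠ k → Disjoint (G j) (G k)) (hcover : ∀ i, ∃ j, i ∈ G j) (f : ι → M) :
    ∑ i, f i = ∑ j, ∑ i ∈ G j, f i := by
  classical
  rw [← Finset.sum_biUnion fun j _ k _ hjk => hdisj j k hjk]
  congr 1
  ext i
  simpa using hcover i

theorem isSubgradient_sum_restrictBlock [Fintype ι] [Fintype J]
    (hdisj : ∀ j k, j ≠ k → Disjoint (G j) (G k)) (hcover : ∀ i, ∃ j, i ∈ G j)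
    (φ : ∀ j, EuclideanSpace ℝ (G j) → ℝ) {x g : EuclideanSpace ℝ ι}
    (h : ∀ j, IsSubgradient (φ j) (restrictBlock (G j) x) (restrictBlock (G j) g)) :
    IsSubgradient (fun y => ∑ j, φ j (restrictBlock (G j) y)) x g := fun w => by
  have hsum := Finset.sum_le_sum fun j (_ : j ∈ Finset.univ) => h j (restrictBlock (G j) w)
  simp only [← map_sub, inner_restrictBlock, Finset.sum_add_distrib] at hsum
  rwa [PiLp.inner_apply, sum_eq_sum_sum_of_partition hdisj hcover]

theorem exists_apply_eq_mul_of_mem (hdisj : ∀ j k, j ≠ k → Disjoint (G j) (G k))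
    (hcover : ∀ i, ∃ j, i ∈ G j) (c : J → ℝ) (v : EuclideanSpace ℝ ι) :
    ∃ x : EuclideanSpace ℝ ι, ∀ j, ∀ k ∈ G j, x k = c j * v k := by
  choose block hblock using hcover
  refine ⟨WithLp.toLp 2 fun k => c (block k) * v k, fun j k hk => ?_⟩
  have : block k = j := by
    by_contra hne
    exact Finset.disjoint_left.mp (hdisj _ _ hne) (hblock k) hk
  simp [this]

theorem exists_isSubgradient_sum_mul_norm_restrictBlock [Fintype ι] [Fintype J]
    (hdisj : ∀ j k, j ≠ k → Disjoint (G j) (G k)) (hcover : ∀ i, ∃ j, i ∈ G j)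
    {a : J → ℝ} (ha : ∀ j, 0 ≤ a j) (v : EuclideanSpace ℝ ι) :
    ∃ x : EuclideanSpace ℝ ι,
      IsSubgradient (fun y => ∑ j, a j * ‖restrictBlock (G j) y‖) x (v - x) ∧
        ∀ i, ∃ c, 0 ≤ c ∧ x i = c * v i := by
  set c := fun j => shrinkFactor (a j) ‖restrictBlock (G j) v‖
  obtain ⟨x, hx⟩ := exists_apply_eq_mul_of_mem hdisj hcover c v
  refine ⟨x, isSubgradient_sum_restrictBlock hdisj hcover (fun j y => a j * ‖y‖) fun j => ?_,
    fun i => ?_⟩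
  · have hx_block : restrictBlock (G j) x = c j • restrictBlock (G j) v := by
      ext k
      simp [hx j k k.2]
    rw [map_sub, hx_block]
    exact isSubgradient_mul_norm_shrinkFactor (ha j) _
  · obtain ⟨j, hi⟩ := hcover i
    exact ⟨c j, shrinkFactor_nonneg (norm_nonneg _), hx j i hi⟩

end Euclidean

theorem prox_decomposition_general (n J : ℕ)
    (G : Fin J → Finset (Fin n))
    (hGdisj : ∀ j k, j ≠ k → Disjoint (G j) (G k))
    (hGcover : ∀ i, ∃ j, i ∈ G j)
    (lam₁ lam₂ : ℝ) (hlam₁ : 0 ≤ lam₁) (hlam₂ : 0 ≤ lam₂)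
    (ω : Fin J → ℝ) (hω : ∀ j, 0 < ω j)
    (u v : EuclideanSpace ℝ (Fin n)) :
    let p₁ : EuclideanSpace ℝ (Fin n) → ℝ :=
      fun x => lam₁ * ∑ j, ω j * Real.sqrt (∑ k ∈ G j, (x k) ^ 2)
    let p₂ : EuclideanSpace ℝ (Fin n) → ℝ := fun x => lam₂ * ∑ i, |x i|
    (∀ w : EuclideanSpace ℝ (Fin n),
        p₂ v + 1 / 2 * ‖v - u‖ ^ 2 ≤ p₂ w + 1 / 2 * ‖w - u‖ ^ 2) →
    ∃ x : EuclideanSpace ℝ (Fin n),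
      (∀ w, p₁ x + p₂ x + 1 / 2 * ‖x - u‖ ^ 2 ≤ p₁ w + p₂ w + 1 / 2 * ‖w - u‖ ^ 2) ∧
      (∀ w, p₁ x + 1 / 2 * ‖x - v‖ ^ 2 ≤ p₁ w + 1 / 2 * ‖w - v‖ ^ 2) ∧
      (∀ w, (∀ w', p₁ w + p₂ w + 1 / 2 * ‖w - u‖ ^ 2 ≤ p₁ w' + p₂ w' + 1 / 2 * ‖w' - u‖ ^ 2)
        → w = x) ∧
      (∀ w, (∀ w', p₁ w + 1 / 2 * ‖w - v‖ ^ 2 ≤ p₁ w' + 1 / 2 * ‖w' - v‖ ^ 2) → w = x) := by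
  intro p₁ p₂ hv
  have hp₁ : p₁ = fun y => ∑ j, lam₁ * ω j * ‖restrictBlock (G j) y‖ := by
    simp only [p₁, norm_restrictBlock, Finset.mul_sum, mul_assoc]
  have hp₂ : p₂ = fun y => ∑ i, lam₂ * ‖y i‖ := by
    simp only [p₂, Real.norm_eq_abs, Finset.mul_sum]
  have hv₂ := isSubgradient_apply_of_isProx_sum_mul_norm hlam₂ (hp₂ ▸ hv : IsProx _ u v)
  obtain ⟨x, h₁, hx⟩ := exists_isSubgradient_sum_mul_norm_restrictBlock hGdisj hGcover
    (fun j => mul_nonneg hlam₁ (hω j).le) v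
  rw [← hp₁] at h₁
  have h₂ : IsSubgradient p₂ x (u - v) := hp₂ ▸ isSubgradient_sum_mul_norm_of_apply_eq_mul hv₂ hx
  have h : IsSubgradient (fun w => p₁ w + p₂ w) x (u - x) := by
    simpa using h₁.add h₂
  exact ⟨x, h.isProx, h₁.isProx, fun w hw => h.eq_of_isProx hw, fun w hw => h₁.eq_of_isProx hw⟩

/-- With `p₁(x) = λ₁ Σⱼ ωⱼ‖x_{Gⱼ}‖` and `p₂(x) = λ₂‖x‖₁`, if `v` is the
minimizer of `w ↦ p₂(w) + (1/2)‖w − u‖²`, then the unique minimizer of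
`w ↦ p₁(w) + p₂(w) + (1/2)‖w − u‖²` coincides with the unique minimizer of
`w ↦ p₁(w) + (1/2)‖w − v‖²`; i.e. `Prox_{p₁+p₂} = Prox_{p₁} ∘ Prox_{p₂}`. -/
theorem prox_decomposition (n J : ℕ) (hn : 0 < n) (hJ : 0 < J)
    (G : Fin J → Finset (Fin n))
    (hGne : ∀ j, (G j).Nonempty)
    (hGdisj : ∀ j k, j ≠ k → Disjoint (G j) (G k))
    (hGcover : ∀ i, ∃ j, i ∈ G j)
    (lam₁ lam₂ : ℝ) (hlam₁ : 0 ≤ lam₁) (hlam₂ : 0 ≤ lam₂)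
    (ω : Fin J → ℝ) (hω : ∀ j, 0 < ω j)
    (u v : EuclideanSpace ℝ (Fin n)) :
    let p₁ : EuclideanSpace ℝ (Fin n) → ℝ :=
      fun x => lam₁ * ∑ j, ω j * Real.sqrt (∑ k ∈ G j, (x k) ^ 2)
    let p₂ : EuclideanSpace ℝ (Fin n) → ℝ := fun x => lam₂ * ∑ i, |x i|
    (∀ w : EuclideanSpace ℝ (Fin n),
        p₂ v + 1 / 2 * ‖v - u‖ ^ 2 ≤ p₂ w + 1 / 2 * ‖w - u‖ ^ 2) →
    ∃ x : EuclideanSpace ℝ (Fin n),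
      (∀ w, p₁ x + p₂ x + 1 / 2 * ‖x - u‖ ^ 2 ≤ p₁ w + p₂ w + 1 / 2 * ‖w - u‖ ^ 2) ∧
      (∀ w, p₁ x + 1 / 2 * ‖x - v‖ ^ 2 ≤ p₁ w + 1 / 2 * ‖w - v‖ ^ 2) ∧
      (∀ w, (∀ w', p₁ w + p₂ w + 1 / 2 * ‖w - u‖ ^ 2 ≤ p₁ w' + p₂ w' + 1 / 2 * ‖w' - u‖ ^ 2)
        → w = x) ∧
      (∀ w, (∀ w', p₁ w + 1 / 2 * ‖w - v‖ ^ 2 ≤ p₁ w' + 1 / 2 * ‖w' - v‖ ^ 2) → w = x) :=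
  prox_decomposition_general n J G hGdisj hGcover lam₁ lam₂ hlam₁ hlam₂ ω hω u v
end

section
/- Let n be a positive integer, let {G₁, …, G_J} be a partition of {1, …, n} into nonempty pairwise disjoint index sets, let σ > 0 and λ_{1,1}, …, λ_{1,J} > 0, and let v ∈ ℝⁿ. For each j, let Σ_j ∈ ℝ^{|G_j|×|G_j|} be chosen as follows: Σ_j = (σλ_{1,j}/‖v_{G_j}‖)·(I − v_{G_j}v_{G_j}ᵀ/‖v_{G_j}‖²) if ‖v_{G_j}‖ > σλ_{1,j}; Σ_j = I − (t_j/(σλ_{1,j})²)·v_{G_j}v_{G_j}ᵀ for some t_j ∈ [0, 1] if ‖v_{G_j}‖ = σλ_{1,j}; and Σ_j = I if ‖v_{G_j}‖ < σλ_{1,j}. Let Σ ∈ ℝ^{n×n} be the block-diagonal matrix with blocks Σ_j placed on the coordinates G_j, and let Θ = Diag(θ) with θ ∈ ℝⁿ satisfying θᵢ ∈ [0, 1] for all i and θᵢ = 1 whenever vᵢ ≠ 0. Then the matrix M = (I − Σ)Θ is symmetric and positive semidefinite. -/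
/-!
On the coordinates of a group `Gⱼ`, with `s = σλ₁ⱼ` and `q = ‖v_{Gⱼ}‖²`, one has
`I − Σⱼ = α(s, q)·I + β(s, q, tⱼ)·v_{Gⱼ}v_{Gⱼ}ᵀ` with `α, β ≥ 0` in each of the three regimes.
Since `θᵢ = 1` wherever `vᵢ ≠ 0`, right multiplication by `Θ` leaves `vvᵀ` unchanged, so
`(I − Σ)Θ` is the sum over the groups of `α·Diag(θ_{Gⱼ}) + β·v_{Gⱼ}v_{Gⱼ}ᵀ` (extended by zero),
a sum of nonnegative combinations of positive semidefinite matrices.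
-/

open Matrix

namespace GroupSoftThreshold

-- The coefficients `α(s, q)` and `β(s, q, t)`.
noncomputable def diagCoeff (s q : ℝ) : ℝ :=
  if s < √q then 1 - s / √q else 0

noncomputable def rankOneCoeff (s q t : ℝ) : ℝ :=
  if s < √q then s / (√q * q) else if √q = s then t / s ^ 2 else 0

lemma diagCoeff_nonneg (s q : ℝ) : 0 ≤ diagCoeff s q := by
  unfold diagCoeff
  split_ifs with h
  · exact sub_nonneg.2 (div_le_one_of_le₀ h.le (Real.sqrt_nonneg q))
  · exact le_rfl

lemma rankOneCoeff_nonneg {s t : ℝ} (q : ℝ) (hs : 0 ≤ s) (ht : 0 ≤ t) :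
    0 ≤ rankOneCoeff s q t := by
  unfold rankOneCoeff
  split_ifs with h
  · have hq : 0 < q := Real.sqrt_pos.1 (hs.trans_lt h)
    positivity
  · positivity
  · exact le_rfl

lemma sub_jacobianEntry_eq (s q t δ a b : ℝ) :
    δ - (if s < √q then s / √q * (δ - a * b / q)
      else if √q = s then δ - t / s ^ 2 * a * b else δ) =
    diagCoeff s q * δ + rankOneCoeff s q t * (a * b) := by
  unfold diagCoeff rankOneCoeff
  split_ifs <;> ring

variable {ι : Type*} [DecidableEq ι]

noncomputable def groupBlock (g : Finset ι) (s t : ℝ) (v θ : ι → ℝ) : Matrix ι ι ℝ :=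
  diagCoeff s (∑ l ∈ g, v l ^ 2) • diagonal ((g : Set ι).indicator θ) +
    rankOneCoeff s (∑ l ∈ g, v l ^ 2) t •
      vecMulVec ((g : Set ι).indicator v) ((g : Set ι).indicator v)

lemma groupBlock_posSemidef [Fintype ι] (g : Finset ι) {s t : ℝ} (v : ι → ℝ) {θ : ι → ℝ}
    (hs : 0 ≤ s) (ht : 0 ≤ t) (hθ : 0 ≤ θ) : (groupBlock g s t v θ).PosSemidef :=
  ((PosSemidef.diagonal (Set.indicator_nonneg fun i _ => hθ i)).smul (diagCoeff_nonneg _ _)).add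
    ((posSemidef_vecMulVec_self_star _).smul (rankOneCoeff_nonneg _ hs ht))

lemma groupBlock_apply_of_notMem {g : Finset ι} {s t : ℝ} {v θ : ι → ℝ} {i : ι} (hi : i ∉ g)
    (k : ι) : groupBlock g s t v θ i k = 0 := by
  simp [groupBlock, diagonal_apply, vecMulVec_apply, hi]

lemma one_sub_mul_diagonal_apply_eq_groupBlock [Fintype ι] {S : Matrix ι ι ℝ} {g : Finset ι}
    {s t : ℝ} {v θ : ι → ℝ} {i : ι} (hi : i ∈ g)
    (hS : ∀ k ∈ g, S i k =
      if s < √(∑ l ∈ g, v l ^ 2) then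
        (s / √(∑ l ∈ g, v l ^ 2)) * ((if i = k then 1 else 0) - v i * v k / (∑ l ∈ g, v l ^ 2))
      else if √(∑ l ∈ g, v l ^ 2) = s then (if i = k then 1 else 0) - (t / s ^ 2) * v i * v k
      else (if i = k then 1 else 0))
    (hS_off : ∀ k ∉ g, S i k = 0) (hvθ : ∀ k, v k * θ k = v k) (k : ι) :
    ((1 - S) * diagonal θ) i k = groupBlock g s t v θ i k := by
  rw [mul_diagonal, Matrix.sub_apply, one_apply]
  by_cases hk : k ∈ g
  · rw [hS k hk, sub_jacobianEntry_eq]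
    simp only [groupBlock, Matrix.add_apply, Matrix.smul_apply, diagonal_apply, vecMulVec_apply,
      Set.indicator_of_mem (Finset.mem_coe.2 hi), Set.indicator_of_mem (Finset.mem_coe.2 hk),
      smul_eq_mul]
    split_ifs with hik
    · subst hik
      linear_combination rankOneCoeff s _ t * v i * hvθ i
    · linear_combination rankOneCoeff s _ t * v i * hvθ k
  · have hik : i ≠ k := fun h => hk (h ▸ hi)
    simp [groupBlock, vecMulVec_apply, hS_off k hk, hik, hk]

end GroupSoftThreshold

open GroupSoftThreshold in
theorem jacobian_product_psd_general (n J : ℕ)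
    (G : Fin J → Finset (Fin n))
    (hGdisj : ∀ j k, j ≠ k → Disjoint (G j) (G k))
    (hGcover : ∀ i, ∃ j, i ∈ G j)
    (σ : ℝ) (hσ : 0 < σ) (lam : Fin J → ℝ) (hlam : ∀ j, 0 < lam j)
    (v : Fin n → ℝ) (t : Fin J → ℝ) (ht : ∀ j, 0 ≤ t j ∧ t j ≤ 1)
    (S : Matrix (Fin n) (Fin n) ℝ)
    (hSblock : ∀ j, ∀ i ∈ G j, ∀ k ∈ G j,
      S i k =
        if σ * lam j < Real.sqrt (∑ l ∈ G j, (v l) ^ 2) then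
          (σ * lam j / Real.sqrt (∑ l ∈ G j, (v l) ^ 2)) *
            ((if i = k then 1 else 0) - v i * v k / (∑ l ∈ G j, (v l) ^ 2))
        else if Real.sqrt (∑ l ∈ G j, (v l) ^ 2) = σ * lam j then
          (if i = k then 1 else 0) - (t j / (σ * lam j) ^ 2) * v i * v k
        else
          (if i = k then 1 else 0))
    (hSoff : ∀ i k : Fin n, (∀ j, ¬(i ∈ G j ∧ k ∈ G j)) → S i k = 0)
    (θ : Fin n → ℝ) (hθ : ∀ i, 0 ≤ θ i ∧ θ i ≤ 1) (hθ1 : ∀ i, v i ≠ 0 → θ i = 1) :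
    ((1 - S) * Matrix.diagonal θ).IsSymm ∧ ((1 - S) * Matrix.diagonal θ).PosSemidef := by
  have hvθ : ∀ i, v i * θ i = v i := fun i => by
    by_cases h : v i = 0 <;> simp [h, hθ1]
  have hunique : ∀ {i j j'}, i ∈ G j → i ∈ G j' → j = j' := fun hj hj' => by
    by_contra hne
    exact Finset.disjoint_left.1 (hGdisj _ _ hne) hj hj'
  have hM : (1 - S) * diagonal θ = ∑ j, groupBlock (G j) (σ * lam j) (t j) v θ := by
    ext i k
    obtain ⟨j, hij⟩ := hGcover i
    rw [Matrix.sum_apply, Fintype.sum_eq_single j fun j' hj' =>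
      groupBlock_apply_of_notMem (fun hij' => hj' (hunique hij' hij)) k]
    refine one_sub_mul_diagonal_apply_eq_groupBlock hij (hSblock j i hij)
      (fun k hk => hSoff i k ?_) hvθ k
    rintro j' ⟨hij', hkj'⟩
    exact hk (hunique hij' hij ▸ hkj')
  have hpsd : ((1 - S) * diagonal θ).PosSemidef := hM ▸ posSemidef_sum Finset.univ fun j _ =>
    groupBlock_posSemidef (G j) v (mul_pos hσ (hlam j)).le (ht j).1 fun i => (hθ i).1
  exact ⟨isHermitian_iff_isSymm.1 hpsd.isHermitian, hpsd⟩

/-- With `Σ` block diagonal (blocks `Σⱼ` on the coordinates `Gⱼ` as in the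
generalized Jacobian of the group-soft-thresholding operator) and `Θ = Diag(θ)` with
`θᵢ ∈ [0,1]` and `θᵢ = 1` whenever `vᵢ ≠ 0`, the matrix `M = (I − Σ)Θ` is symmetric
positive semidefinite. -/
theorem jacobian_product_psd (n J : ℕ) (hn : 0 < n) (hJ : 0 < J)
    (G : Fin J → Finset (Fin n))
    (hGne : ∀ j, (G j).Nonempty)
    (hGdisj : ∀ j k, j ≠ k → Disjoint (G j) (G k))
    (hGcover : ∀ i, ∃ j, i ∈ G j)
    (σ : ℝ) (hσ : 0 < σ) (lam : Fin J → ℝ) (hlam : ∀ j, 0 < lam j)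
    (v : Fin n → ℝ) (t : Fin J → ℝ) (ht : ∀ j, 0 ≤ t j ∧ t j ≤ 1)
    (S : Matrix (Fin n) (Fin n) ℝ)
    (hSblock : ∀ j, ∀ i ∈ G j, ∀ k ∈ G j,
      S i k =
        if σ * lam j < Real.sqrt (∑ l ∈ G j, (v l) ^ 2) then
          (σ * lam j / Real.sqrt (∑ l ∈ G j, (v l) ^ 2)) *
            ((if i = k then 1 else 0) - v i * v k / (∑ l ∈ G j, (v l) ^ 2))
        else if Real.sqrt (∑ l ∈ G j, (v l) ^ 2) = σ * lam j then
          (if i = k then 1 else 0) - (t j / (σ * lam j) ^ 2) * v i * v k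
        else
          (if i = k then 1 else 0))
    (hSoff : ∀ i k : Fin n, (∀ j, ¬(i ∈ G j ∧ k ∈ G j)) → S i k = 0)
    (θ : Fin n → ℝ) (hθ : ∀ i, 0 ≤ θ i ∧ θ i ≤ 1) (hθ1 : ∀ i, v i ≠ 0 → θ i = 1) :
    ((1 - S) * Matrix.diagonal θ).IsSymm ∧ ((1 - S) * Matrix.diagonal θ).PosSemidef :=
  jacobian_product_psd_general n J G hGdisj hGcover σ hσ lam hlam v t ht S hSblock hSoff θ hθ hθ1
end

section
/- Let m, m_E, m_I, n be positive integers. Let V₁ : ℝ^m → ℝ^m be self-adjoint and positive definite, and let V₂ : ℝⁿ → ℝⁿ and V₃ : ℝ^{m_I} → ℝ^{m_I} be self-adjoint positive semidefinite with I − V₂ and I − V₃ positive semidefinite. Let A : ℝⁿ → ℝ^m, B_E : ℝⁿ → ℝ^{m_E}, B_I : ℝⁿ → ℝ^{m_I} be linear maps with adjoints A*, B_E*, B_I*. For d = (d₁, d₂, d₃) ∈ ℝ^m × ℝ^{m_E} × ℝ^{m_I}, define H(d) = (V₁d₁ + A V₂ w, B_E V₂ w, V₃d₃ + B_I V₂ w),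 where w = A*d₁ + B_E*d₂ + B_I*d₃. Then H is positive semidefinite, i.e., ⟨d, H(d)⟩ ≥ 0 for all d; moreover, if ⟨d, H(d)⟩ = 0, then d₁ = 0, V₃d₃ = 0, and V₂(B_E*d₂ + B_I*d₃) = 0. -/
/-!
Moving `A`, `B_E`, `B_I` across the inner product turns `⟪d, H d⟫` into
`⟪d₁, V₁ d₁⟫ + ⟪d₃, V₃ d₃⟫ + ⟪w, V₂ w⟫`, a sum of nonnegative terms. If it vanishes, every
term vanishes; for a positive operator `T`, `⟪x, T x⟫ = 0` forces `T x = 0`, and once `d₁ = 0`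
the vector `w` is `B_E* d₂ + B_I* d₃`.
-/

open RealInnerProductSpace

variable {E : Type*} [NormedAddCommGroup E] [InnerProductSpace ℝ E]

/-- The quadratic `t ↦ ⟪x - t • T x, T (x - t • T x)⟫` is nonnegative, so its discriminant
`4 ‖T x‖⁴` is nonpositive. -/
theorem LinearMap.IsPositive.apply_eq_zero_of_inner_self_eq_zero {T : E →ₗ[ℝ] E}
    (hT : T.IsPositive) {x : E} (hx : ⟪x, T x⟫ = 0) : T x = 0 := by
  have hquad : ∀ t : ℝ, 0 ≤ ⟪T x, T (T x)⟫ * (t * t) + (-2 * ⟪T x, T x⟫) * t + 0 := by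
    intro t
    have h := hT.inner_nonneg_right (x - t • T x)
    have hsym : ⟪x, T (T x)⟫ = ⟪T x, T x⟫ := (hT.isSymmetric x (T x)).symm
    simp only [map_sub, map_smul, inner_sub_left, inner_sub_right, real_inner_smul_left,
      real_inner_smul_right, hx, hsym] at h
    linarith
  have hdiscrim := discrim_le_zero hquad
  have hTx : ⟪T x, T x⟫ = 0 := by
    rw [discrim, mul_zero, sub_zero] at hdiscrim
    nlinarith [sq_nonneg ⟪T x, T x⟫, real_inner_self_nonneg (x := T x)]
  exact inner_self_eq_zero.mp hTx

theorem inner_add_inner_add_inner_eq_inner_adjoint_add {F₁ F₂ F₃ : Type*}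
    [NormedAddCommGroup F₁] [InnerProductSpace ℝ F₁] [NormedAddCommGroup F₂]
    [InnerProductSpace ℝ F₂] [NormedAddCommGroup F₃] [InnerProductSpace ℝ F₃]
    {A₁ : E →ₗ[ℝ] F₁} {A₂ : E →ₗ[ℝ] F₂} {A₃ : E →ₗ[ℝ] F₃}
    {A₁star : F₁ →ₗ[ℝ] E} {A₂star : F₂ →ₗ[ℝ] E} {A₃star : F₃ →ₗ[ℝ] E}
    (h₁ : ∀ x y, ⟪A₁ x, y⟫ = ⟪x, A₁star y⟫) (h₂ : ∀ x y, ⟪A₂ x, y⟫ = ⟪x, A₂star y⟫)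
    (h₃ : ∀ x y, ⟪A₃ x, y⟫ = ⟪x, A₃star y⟫) (d₁ : F₁) (d₂ : F₂) (d₃ : F₃) (u : E) :
    ⟪d₁, A₁ u⟫ + ⟪d₂, A₂ u⟫ + ⟪d₃, A₃ u⟫ = ⟪A₁star d₁ + A₂star d₂ + A₃star d₃, u⟫ := by
  rw [inner_add_left, inner_add_left, real_inner_comm u, real_inner_comm u, real_inner_comm u,
    ← h₁, ← h₂, ← h₃, real_inner_comm d₁, real_inner_comm d₂, real_inner_comm d₃]

theorem generalized_hessian_psd_general (m mE mI n : ℕ)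
    (V₁ : EuclideanSpace ℝ (Fin m) →ₗ[ℝ] EuclideanSpace ℝ (Fin m))
    (hV₁pd : ∀ x, x ≠ 0 → 0 < ⟪x, V₁ x⟫)
    (V₂ : EuclideanSpace ℝ (Fin n) →ₗ[ℝ] EuclideanSpace ℝ (Fin n))
    (hV₂sa : ∀ x y, ⟪V₂ x, y⟫ = ⟪x, V₂ y⟫)
    (hV₂psd : ∀ x, 0 ≤ ⟪x, V₂ x⟫)
    (V₃ : EuclideanSpace ℝ (Fin mI) →ₗ[ℝ] EuclideanSpace ℝ (Fin mI))
    (hV₃sa : ∀ x y, ⟪V₃ x, y⟫ = ⟪x, V₃ y⟫)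
    (hV₃psd : ∀ x, 0 ≤ ⟪x, V₃ x⟫)
    (A : EuclideanSpace ℝ (Fin n) →ₗ[ℝ] EuclideanSpace ℝ (Fin m))
    (Astar : EuclideanSpace ℝ (Fin m) →ₗ[ℝ] EuclideanSpace ℝ (Fin n))
    (hA : ∀ x y, ⟪A x, y⟫ = ⟪x, Astar y⟫)
    (BE : EuclideanSpace ℝ (Fin n) →ₗ[ℝ] EuclideanSpace ℝ (Fin mE))
    (BEstar : EuclideanSpace ℝ (Fin mE) →ₗ[ℝ] EuclideanSpace ℝ (Fin n))
    (hBE : ∀ x y, ⟪BE x, y⟫ = ⟪x, BEstar y⟫)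
    (BI : EuclideanSpace ℝ (Fin n) →ₗ[ℝ] EuclideanSpace ℝ (Fin mI))
    (BIstar : EuclideanSpace ℝ (Fin mI) →ₗ[ℝ] EuclideanSpace ℝ (Fin n))
    (hBI : ∀ x y, ⟪BI x, y⟫ = ⟪x, BIstar y⟫) :
    ∀ (d₁ : EuclideanSpace ℝ (Fin m)) (d₂ : EuclideanSpace ℝ (Fin mE))
      (d₃ : EuclideanSpace ℝ (Fin mI)),
      (0 ≤ ⟪d₁, V₁ d₁ + A (V₂ (Astar d₁ + BEstar d₂ + BIstar d₃))⟫
          + ⟪d₂, BE (V₂ (Astar d₁ + BEstar d₂ + BIstar d₃))⟫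
          + ⟪d₃, V₃ d₃ + BI (V₂ (Astar d₁ + BEstar d₂ + BIstar d₃))⟫) ∧
      ((⟪d₁, V₁ d₁ + A (V₂ (Astar d₁ + BEstar d₂ + BIstar d₃))⟫
          + ⟪d₂, BE (V₂ (Astar d₁ + BEstar d₂ + BIstar d₃))⟫
          + ⟪d₃, V₃ d₃ + BI (V₂ (Astar d₁ + BEstar d₂ + BIstar d₃))⟫ = 0) →
        d₁ = 0 ∧ V₃ d₃ = 0 ∧ V₂ (BEstar d₂ + BIstar d₃) = 0) := by
  have hV₁nonneg (x) : 0 ≤ ⟪x, V₁ x⟫ := by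
    rcases eq_or_ne x 0 with rfl | hx
    · simp
    · exact (hV₁pd x hx).le
  have hV₂pos : V₂.IsPositive :=
    V₂.isPositive_iff.2 ⟨hV₂sa, fun x => real_inner_comm x _ ▸ hV₂psd x⟩
  have hV₃pos : V₃.IsPositive :=
    V₃.isPositive_iff.2 ⟨hV₃sa, fun x => real_inner_comm x _ ▸ hV₃psd x⟩
  intro d₁ d₂ d₃
  set w := Astar d₁ + BEstar d₂ + BIstar d₃ with hw
  have hform : ⟪d₁, V₁ d₁ + A (V₂ w)⟫ + ⟪d₂, BE (V₂ w)⟫ + ⟪d₃, V₃ d₃ + BI (V₂ w)⟫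
      = ⟪d₁, V₁ d₁⟫ + ⟪d₃, V₃ d₃⟫ + ⟪w, V₂ w⟫ := by
    rw [inner_add_right, inner_add_right,
      ← inner_add_inner_add_inner_eq_inner_adjoint_add hA hBE hBI]
    ring
  rw [hform]
  refine ⟨by linarith [hV₁nonneg d₁, hV₂psd w, hV₃psd d₃], fun hzero => ?_⟩
  have hd₁ : d₁ = 0 := by
    by_contra hd₁
    linarith [hV₁pd d₁ hd₁, hV₂psd w, hV₃psd d₃]
  have hd₃ : ⟪d₃, V₃ d₃⟫ = 0 := by linarith [hV₁nonneg d₁, hV₂psd w, hV₃psd d₃]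
  have hw₀ : ⟪w, V₂ w⟫ = 0 := by linarith [hV₁nonneg d₁, hV₂psd w, hV₃psd d₃]
  refine ⟨hd₁, hV₃pos.apply_eq_zero_of_inner_self_eq_zero hd₃, ?_⟩
  simpa [hw, hd₁] using hV₂pos.apply_eq_zero_of_inner_self_eq_zero hw₀

/-- With `V₁` self-adjoint positive definite, `V₂, V₃` self-adjoint positive
semidefinite with `I − V₂`, `I − V₃` positive semidefinite, and linear maps `A, B_E, B_I`
with adjoints `A*, B_E*, B_I*`, the map
`H(d₁,d₂,d₃) = (V₁d₁ + A V₂ w, B_E V₂ w, V₃d₃ + B_I V₂ w)` with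
`w = A*d₁ + B_E*d₂ + B_I*d₃` is positive semidefinite, and `⟨d, H(d)⟩ = 0` implies
`d₁ = 0`, `V₃d₃ = 0`, and `V₂(B_E*d₂ + B_I*d₃) = 0`. -/
theorem generalized_hessian_psd (m mE mI n : ℕ)
    (hm : 0 < m) (hmE : 0 < mE) (hmI : 0 < mI) (hn : 0 < n)
    (V₁ : EuclideanSpace ℝ (Fin m) →ₗ[ℝ] EuclideanSpace ℝ (Fin m))
    (hV₁sa : ∀ x y, ⟪V₁ x, y⟫ = ⟪x, V₁ y⟫)
    (hV₁pd : ∀ x, x ≠ 0 → 0 < ⟪x, V₁ x⟫)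
    (V₂ : EuclideanSpace ℝ (Fin n) →ₗ[ℝ] EuclideanSpace ℝ (Fin n))
    (hV₂sa : ∀ x y, ⟪V₂ x, y⟫ = ⟪x, V₂ y⟫)
    (hV₂psd : ∀ x, 0 ≤ ⟪x, V₂ x⟫)
    (hV₂I : ∀ x, 0 ≤ ⟪x, x - V₂ x⟫)
    (V₃ : EuclideanSpace ℝ (Fin mI) →ₗ[ℝ] EuclideanSpace ℝ (Fin mI))
    (hV₃sa : ∀ x y, ⟪V₃ x, y⟫ = ⟪x, V₃ y⟫)
    (hV₃psd : ∀ x, 0 ≤ ⟪x, V₃ x⟫)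
    (hV₃I : ∀ x, 0 ≤ ⟪x, x - V₃ x⟫)
    (A : EuclideanSpace ℝ (Fin n) →ₗ[ℝ] EuclideanSpace ℝ (Fin m))
    (Astar : EuclideanSpace ℝ (Fin m) →ₗ[ℝ] EuclideanSpace ℝ (Fin n))
    (hA : ∀ x y, ⟪A x, y⟫ = ⟪x, Astar y⟫)
    (BE : EuclideanSpace ℝ (Fin n) →ₗ[ℝ] EuclideanSpace ℝ (Fin mE))
    (BEstar : EuclideanSpace ℝ (Fin mE) →ₗ[ℝ] EuclideanSpace ℝ (Fin n))
    (hBE : ∀ x y, ⟪BE x, y⟫ = ⟪x, BEstar y⟫)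
    (BI : EuclideanSpace ℝ (Fin n) →ₗ[ℝ] EuclideanSpace ℝ (Fin mI))
    (BIstar : EuclideanSpace ℝ (Fin mI) →ₗ[ℝ] EuclideanSpace ℝ (Fin n))
    (hBI : ∀ x y, ⟪BI x, y⟫ = ⟪x, BIstar y⟫) :
    ∀ (d₁ : EuclideanSpace ℝ (Fin m)) (d₂ : EuclideanSpace ℝ (Fin mE))
      (d₃ : EuclideanSpace ℝ (Fin mI)),
      (0 ≤ ⟪d₁, V₁ d₁ + A (V₂ (Astar d₁ + BEstar d₂ + BIstar d₃))⟫
          + ⟪d₂, BE (V₂ (Astar d₁ + BEstar d₂ + BIstar d₃))⟫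
          + ⟪d₃, V₃ d₃ + BI (V₂ (Astar d₁ + BEstar d₂ + BIstar d₃))⟫) ∧
      ((⟪d₁, V₁ d₁ + A (V₂ (Astar d₁ + BEstar d₂ + BIstar d₃))⟫
          + ⟪d₂, BE (V₂ (Astar d₁ + BEstar d₂ + BIstar d₃))⟫
          + ⟪d₃, V₃ d₃ + BI (V₂ (Astar d₁ + BEstar d₂ + BIstar d₃))⟫ = 0) →
        d₁ = 0 ∧ V₃ d₃ = 0 ∧ V₂ (BEstar d₂ + BIstar d₃) = 0) :=
  generalized_hessian_psd_general m mE mI n V₁ hV₁pd V₂ hV₂sa hV₂psd V₃ hV₃sa hV₃psd A Astar hA BE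
    BEstar hBE BI BIstar hBI
end

section
/- Let n be a positive integer, let {G₁, …, G_J} be a partition of {1, …, n} into nonempty pairwise disjoint index sets, let λ₁ ≥ 0, λ₂ > 0, ω₁, …, ω_J > 0, and set p(x) = λ₁ Σ_{j=1}^J ω_j‖x_{G_j}‖ + λ₂‖x‖₁. Fix x ∈ ℝⁿ and denote by p′(x; d) the one-sided directional derivative lim_{t→0⁺} (p(x + t·d) − p(x))/t. Then for every d ∈ ℝⁿ, the equality p′(x; d) = −p′(x; −d) holds if and only if dᵢ = 0 for every index i with xᵢ = 0. -/
/-!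
Each summand of `p` is a Euclidean norm `‖a + t • b‖` of an affine function of `t`. When
`a ≠ 0` the norm is differentiable at `a`, so its contributions to `p′(x; d)` and `p′(x; -d)`
cancel; when `a = 0` it is positively homogeneous and both contribute `‖b‖`. Hence
`p′(x; d) + p′(x; -d) = 2 λ₁ Σ_{x_{G_j} = 0} ω_j ‖d_{G_j}‖ + 2 λ₂ Σ_{x_i = 0} |d_i|`, a sum of
nonnegative terms which vanishes exactly when `d` vanishes wherever `x` does: the `ℓ₁` part
forces this since `λ₂ > 0`, and it kills the group part.
-/

open Filter Topology

noncomputable def symmSlope (f : ℝ → ℝ) (t : ℝ) : ℝ := (f t - f 0) / t + (f (-t) - f 0) / t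

theorem HasDerivAt.tendsto_symmSlope {f : ℝ → ℝ} {f' : ℝ} (hf : HasDerivAt f f' 0) :
    Tendsto (symmSlope f) (𝓝[>] 0) (𝓝 0) := by
  have hneg : HasDerivAt (fun s => f (-s)) (-f') 0 := by
    simpa using HasDerivAt.comp_const_sub (f := f) 0 0 (by simpa using hf)
  have := hf.tendsto_slope_zero_right.add hneg.tendsto_slope_zero_right
  simp only [zero_add, add_neg_cancel, smul_eq_mul, neg_zero] at this
  refine this.congr fun t => ?_
  simp only [symmSlope]
  ring

theorem tendsto_symmSlope_norm_add_smul {F : Type*} [NormedAddCommGroup F]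
    [InnerProductSpace ℝ F] [DecidableEq F] (a b : F) :
    Tendsto (symmSlope fun s => ‖a + s • b‖) (𝓝[>] 0) (𝓝 (if a = 0 then 2 * ‖b‖ else 0)) := by
  split_ifs with ha
  · refine tendsto_const_nhds.congr' ?_
    filter_upwards [self_mem_nhdsWithin] with t (ht : 0 < t)
    simp only [symmSlope, ha, zero_add, zero_smul, norm_zero, sub_zero, neg_smul, norm_neg,
      norm_smul, Real.norm_of_nonneg ht.le, mul_div_cancel_left₀ _ ht.ne']
    ring
  · have hdiff : DifferentiableAt ℝ (fun s : ℝ => ‖a + s • b‖) 0 :=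
      DifferentiableAt.norm ℝ (by fun_prop) (by simpa using ha)
    exact hdiff.hasDerivAt.tendsto_symmSlope

theorem symmSlope_add (f g : ℝ → ℝ) (t : ℝ) :
    symmSlope (fun s => f s + g s) t = symmSlope f t + symmSlope g t := by
  simp only [symmSlope]; ring

theorem symmSlope_const_mul (c : ℝ) (f : ℝ → ℝ) (t : ℝ) :
    symmSlope (fun s => c * f s) t = c * symmSlope f t := by
  simp only [symmSlope]; ring

theorem symmSlope_sum {κ : Type*} (u : Finset κ) (f : κ → ℝ → ℝ) (t : ℝ) :
    symmSlope (fun s => ∑ j ∈ u, f j s) t = ∑ j ∈ u, symmSlope (f j) t := by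
  simp only [symmSlope, ← Finset.sum_sub_distrib, Finset.sum_div, ← Finset.sum_add_distrib]

theorem symmSlope_comp_add_smul {E : Type*} [AddCommGroup E] [Module ℝ E] (f : E → ℝ)
    (x d : E) (t : ℝ) :
    symmSlope (fun s => f (x + s • d)) t =
      (f (x + t • d) - f x) / t + (f (x + t • -d) - f x) / t := by
  simp only [symmSlope, zero_smul, add_zero, neg_smul, smul_neg]

section SparseGroupLasso

variable {ι κ : Type*}

def restrictCoords (s : Finset ι) : EuclideanSpace ℝ ι →ₗ[ℝ] EuclideanSpace ℝ s where
  toFun v := WithLp.toLp 2 fun k => v k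
  map_add' _ _ := rfl
  map_smul' _ _ := rfl

theorem restrictCoords_apply (s : Finset ι) (v : EuclideanSpace ℝ ι) (k : s) :
    restrictCoords s v k = v k :=
  rfl

theorem norm_restrictCoords (s : Finset ι) (v : EuclideanSpace ℝ ι) :
    ‖restrictCoords s v‖ = √(∑ k ∈ s, v k ^ 2) := by
  simp only [EuclideanSpace.norm_eq, restrictCoords_apply, Real.norm_eq_abs, sq_abs]
  rw [Finset.sum_coe_sort s (fun k => v k ^ 2)]

theorem restrictCoords_eq_zero_iff {s : Finset ι} {v : EuclideanSpace ℝ ι} :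
    restrictCoords s v = 0 ↔ ∀ k ∈ s, v k = 0 := by
  rw [← WithLp.ofLp_eq_zero, funext_iff]
  simp [restrictCoords_apply]

variable [Fintype ι] [Fintype κ]

noncomputable def sparseGroupLasso (G : κ → Finset ι) (lam₁ lam₂ : ℝ) (ω : κ → ℝ)
    (v : EuclideanSpace ℝ ι) : ℝ :=
  lam₁ * (∑ j, ω j * √(∑ k ∈ G j, (v k) ^ 2)) + lam₂ * ∑ i, |v i|

variable (G : κ → Finset ι) (lam₁ lam₂ : ℝ) (ω : κ → ℝ) (x d : EuclideanSpace ℝ ι)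

theorem sparseGroupLasso_add_smul (s : ℝ) :
    sparseGroupLasso G lam₁ lam₂ ω (x + s • d) =
      lam₁ * ∑ j, ω j * ‖restrictCoords (G j) x + s • restrictCoords (G j) d‖
        + lam₂ * ∑ i, ‖x i + s • d i‖ := by
  simp only [sparseGroupLasso, ← map_smul, ← map_add, norm_restrictCoords, Real.norm_eq_abs,
    PiLp.add_apply, PiLp.smul_apply]

open Classical in
/-- The value of `p′(x; d) + p′(x; -d)` for the penalty `p = sparseGroupLasso G lam₁ lam₂ ω`. -/
noncomputable def sparseGroupLassoKink : ℝ :=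
  lam₁ * ∑ j, ω j * (if restrictCoords (G j) x = 0 then 2 * ‖restrictCoords (G j) d‖ else 0)
    + lam₂ * ∑ i, if x i = 0 then 2 * ‖d i‖ else 0

theorem tendsto_symmSlope_sparseGroupLasso :
    Tendsto (symmSlope fun s => sparseGroupLasso G lam₁ lam₂ ω (x + s • d)) (𝓝[>] 0)
      (𝓝 (sparseGroupLassoKink G lam₁ lam₂ ω x d)) := by
  simp only [sparseGroupLasso_add_smul]
  refine (((tendsto_finsetSum _ fun j _ =>
    (tendsto_symmSlope_norm_add_smul _ _).const_mul (ω j)).const_mul lam₁).add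
      ((tendsto_finsetSum _ fun i _ => tendsto_symmSlope_norm_add_smul _ _).const_mul lam₂)).congr
        fun t => ?_
  simp only [symmSlope_add, symmSlope_const_mul, symmSlope_sum]

variable {G lam₁ lam₂ ω x d}

theorem sparseGroupLassoKink_eq_zero_iff (hlam₁ : 0 ≤ lam₁) (hlam₂ : 0 < lam₂)
    (hω : ∀ j, 0 ≤ ω j) :
    sparseGroupLassoKink G lam₁ lam₂ ω x d = 0 ↔ ∀ i, x i = 0 → d i = 0 := by
  have hgroup_nonneg : ∀ j, 0 ≤ ω j * (if restrictCoords (G j) x = 0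
      then 2 * ‖restrictCoords (G j) d‖ else 0) := fun j =>
    mul_nonneg (hω j) (by split_ifs <;> positivity)
  have hcoord_nonneg : ∀ i, 0 ≤ if x i = 0 then 2 * ‖d i‖ else 0 := fun i => by
    split_ifs <;> positivity
  have hcoord_sum : (∑ i, if x i = 0 then 2 * ‖d i‖ else 0) = 0 ↔ ∀ i, x i = 0 → d i = 0 := by
    rw [Finset.sum_eq_zero_iff_of_nonneg fun i _ => hcoord_nonneg i]
    simp
  rw [sparseGroupLassoKink, ← hcoord_sum]
  constructor
  · intro h
    have := (add_eq_zero_iff_of_nonneg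
      (mul_nonneg hlam₁ (Finset.sum_nonneg fun j _ => hgroup_nonneg j))
      (mul_nonneg hlam₂.le (Finset.sum_nonneg fun i _ => hcoord_nonneg i))).1 h
    exact (mul_eq_zero.1 this.2).resolve_left hlam₂.ne'
  · intro h
    have hdx : ∀ i, x i = 0 → d i = 0 := hcoord_sum.1 h
    have hgroup : ∀ j, restrictCoords (G j) x = 0 → restrictCoords (G j) d = 0 := fun j hx =>
      restrictCoords_eq_zero_iff.2 fun k hk => hdx k (restrictCoords_eq_zero_iff.1 hx k hk)
    rw [h, mul_zero, add_zero, Finset.sum_eq_zero fun j _ => ?_, mul_zero]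
    split_ifs with hx
    · simp [hgroup j hx]
    · simp

end SparseGroupLasso

theorem directional_derivative_linearity_iff_general (n J : ℕ)
    (G : Fin J → Finset (Fin n))
    (lam₁ lam₂ : ℝ) (hlam₁ : 0 ≤ lam₁) (hlam₂ : 0 < lam₂)
    (ω : Fin J → ℝ) (hω : ∀ j, 0 < ω j)
    (x : EuclideanSpace ℝ (Fin n))
    (D : EuclideanSpace ℝ (Fin n) → ℝ)
    (hD : ∀ d : EuclideanSpace ℝ (Fin n),
      Tendsto (fun t : ℝ =>
          (((lam₁ * (∑ j, ω j * Real.sqrt (∑ k ∈ G j, ((x + t • d) k) ^ 2))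
              + lam₂ * ∑ i, |(x + t • d) i|)
            - (lam₁ * (∑ j, ω j * Real.sqrt (∑ k ∈ G j, (x k) ^ 2))
              + lam₂ * ∑ i, |x i|)) / t))
        (nhdsWithin 0 (Set.Ioi 0)) (nhds (D d))) :
    ∀ d : EuclideanSpace ℝ (Fin n),
      D d = -D (-d) ↔ ∀ i, x i = 0 → d i = 0 := by
  intro d
  have hkink : D d + D (-d) = sparseGroupLassoKink G lam₁ lam₂ ω x d :=
    tendsto_nhds_unique ((hD d).add (hD (-d)))
      ((tendsto_symmSlope_sparseGroupLasso G lam₁ lam₂ ω x d).congr fun t =>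
        symmSlope_comp_add_smul (sparseGroupLasso G lam₁ lam₂ ω) x d t)
  rw [eq_neg_iff_add_eq_zero, hkink]
  exact sparseGroupLassoKink_eq_zero_iff hlam₁ hlam₂ fun j => (hω j).le

/-- For `p(x) = λ₁ Σⱼ ωⱼ‖x_{Gⱼ}‖ + λ₂‖x‖₁` with `λ₂ > 0` and a fixed `x`,
denoting by `D d` the one-sided directional derivative `p′(x; d)`, one has
`p′(x; d) = −p′(x; −d)` if and only if `dᵢ = 0` for every `i` with `xᵢ = 0`. -/
theorem directional_derivative_linearity_iff (n J : ℕ) (hn : 0 < n) (hJ : 0 < J)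
    (G : Fin J → Finset (Fin n))
    (hGne : ∀ j, (G j).Nonempty)
    (hGdisj : ∀ j k, j ≠ k → Disjoint (G j) (G k))
    (hGcover : ∀ i, ∃ j, i ∈ G j)
    (lam₁ lam₂ : ℝ) (hlam₁ : 0 ≤ lam₁) (hlam₂ : 0 < lam₂)
    (ω : Fin J → ℝ) (hω : ∀ j, 0 < ω j)
    (x : EuclideanSpace ℝ (Fin n))
    (D : EuclideanSpace ℝ (Fin n) → ℝ)
    (hD : ∀ d : EuclideanSpace ℝ (Fin n),
      Tendsto (fun t : ℝ =>
          (((lam₁ * (∑ j, ω j * Real.sqrt (∑ k ∈ G j, ((x + t • d) k) ^ 2))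
              + lam₂ * ∑ i, |(x + t • d) i|)
            - (lam₁ * (∑ j, ω j * Real.sqrt (∑ k ∈ G j, (x k) ^ 2))
              + lam₂ * ∑ i, |x i|)) / t))
        (nhdsWithin 0 (Set.Ioi 0)) (nhds (D d))) :
    ∀ d : EuclideanSpace ℝ (Fin n),
      D d = -D (-d) ↔ ∀ i, x i = 0 → d i = 0 :=
  directional_derivative_linearity_iff_general n J G lam₁ lam₂ hlam₁ hlam₂ ω hω x D hD
end
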